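/- Fix an integer k ≥ 2. There exists a constant C = C(k) such that for all real H ≥ 1, the sum of 1/m over all k-full integers m with m > H satisfies Σ_{m k-full, m > H} 1/m ≤ C · H^{1/k − 1}. -/

import Mathlib

/-!
Each exponent `e ≥ k` of a `k`-full number is `q k` or `(q - 1) k + (k + r)` with `0 < r < k`, so
every `k`-full `m` is `a ^ k * W` with `W = ∏_{i < k - 1} b_i ^ (k + 1 + i)`. For fixed `W` the
tail `∑_{a ^ k W > H} 1 / (a ^ k W)` is at most
`W⁻¹ · 2 (H / W) ^ (1/k - 1) = 2 H ^ (1/k - 1) W ^ (-1/k)`,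
and `∑_b W ^ (-1/k)` factors into `p`-series with exponents `(k + 1 + i) / k > 1`.
-/

open Finset

def IsKFull (k m : ℕ) : Prop := ∀ p : ℕ, p.Prime → p ∣ m → p ^ k ∣ m

open scoped ENNReal

theorem exists_mul_add_sum_mul_eq_of_le {k e : ℕ} (hk : 1 ≤ k) (he : k ≤ e) :
    ∃ (q : ℕ) (r : Fin (k - 1) → ℕ), q * k + ∑ i : Fin (k - 1), r i * (k + 1 + (i : ℕ)) = e := by
  have hdiv := Nat.div_add_mod' e k
  by_cases hr : e % k = 0
  · exact ⟨e / k, 0, by simpa [hr] using hdiv⟩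
  · have hrk : e % k - 1 < k - 1 := by have := Nat.mod_lt e (by omega : 0 < k); omega
    have hq : 1 * k ≤ e / k * k := Nat.mul_le_mul_right k ((Nat.one_le_div_iff (by omega)).2 he)
    refine ⟨e / k - 1, Pi.single ⟨e % k - 1, hrk⟩ 1, ?_⟩
    simp only [Nat.sub_one_mul, Pi.single_apply, ite_mul, one_mul, zero_mul, sum_ite_eq',
      mem_univ, ↓reduceIte]
    omega

theorem IsKFull.exists_pow_mul_prod_pow_eq {k m : ℕ} (hk : 1 ≤ k) (hm : m ≠ 0)
    (h : IsKFull k m) :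
    ∃ (a : ℕ) (b : Fin (k - 1) → ℕ), a ^ k * ∏ i : Fin (k - 1), b i ^ (k + 1 + (i : ℕ)) = m := by
  have hle : ∀ p ∈ m.primeFactors, k ≤ m.factorization p := fun p hp =>
    ((Nat.prime_of_mem_primeFactors hp).pow_dvd_iff_le_factorization hm).1
      (h p (Nat.prime_of_mem_primeFactors hp) (Nat.dvd_of_mem_primeFactors hp))
  -- `max k e` makes the choice total in `e`; it is `e` at every exponent of `m`.
  choose q r hqr using fun e : ℕ => exists_mul_add_sum_mul_eq_of_le hk (le_max_left k e)
  refine ⟨∏ p ∈ m.primeFactors, p ^ q (m.factorization p),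
    fun i => ∏ p ∈ m.primeFactors, p ^ r (m.factorization p) i, ?_⟩
  conv_rhs => rw [Nat.prod_primeFactors_pow_factorization hm]
  simp only [← prod_pow, ← pow_mul]
  rw [prod_comm, ← prod_mul_distrib]
  refine prod_congr rfl fun p hp => ?_
  rw [prod_pow_eq_pow_sum, ← pow_add, hqr, max_eq_right (hle p hp)]

theorem ENNReal.prod_tsum_eq_tsum_pi {α : Type*} : ∀ {n : ℕ} (f : Fin n → α → ℝ≥0∞),
    ∏ i, ∑' a, f i a = ∑' b : Fin n → α, ∏ i, f i (b i)
  | 0, f => by simp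
  | n + 1, f => by
    rw [← (Fin.consEquiv fun _ => α).tsum_eq, ENNReal.tsum_prod', Fin.prod_univ_succ,
      ← ENNReal.tsum_mul_right, prod_tsum_eq_tsum_pi fun i => f i.succ]
    simp [Fin.prod_univ_succ, ENNReal.tsum_mul_left]

theorem tsum_le_of_tsum_ofReal_le {ι : Type*} {f : ι → ℝ} {B : ℝ} (hf : ∀ i, 0 ≤ f i)
    (hB : 0 ≤ B) (h : ∑' i, ENNReal.ofReal (f i) ≤ ENNReal.ofReal B) : ∑' i, f i ≤ B := by
  have := ENNReal.toReal_le_of_le_ofReal hB h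
  rwa [ENNReal.tsum_toReal_eq fun _ => ENNReal.ofReal_ne_top,
    tsum_congr fun i => ENNReal.toReal_ofReal (hf i)] at this

theorem tsum_ofReal_rpow_neg_ne_top {s : ℝ} (hs : 1 < s) :
    ∑' c : ℕ, ENNReal.ofReal ((c : ℝ) ^ (-s)) ≠ ∞ :=
  (Real.summable_nat_rpow.2 (by linarith)).tsum_ofReal_ne_top

theorem tsum_ofReal_inv_sq_tail_le (N : ℕ) :
    ∑' a : ℕ, ENNReal.ofReal (if N < a then ((a : ℝ) ^ 2)⁻¹ else 0) ≤
      ENNReal.ofReal (2 / (N + 1)) := by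
  refine ENNReal.tsum_le_of_sum_range_le fun n => ?_
  rw [← ENNReal.ofReal_sum_of_nonneg fun a _ => by positivity, ← sum_filter]
  refine ENNReal.ofReal_le_ofReal (le_of_eq_of_le ?_ (sum_Ioo_inv_sq_le N n))
  congr 1
  ext a
  simp [and_comm]

noncomputable def invAbove (H t : ℝ) : ℝ≥0∞ := if H < t then ENNReal.ofReal t⁻¹ else 0

theorem invAbove_of_le {H t : ℝ} (h : t ≤ H) : invAbove H t = 0 :=
  if_neg h.not_gt

theorem invAbove_mul {c : ℝ} (hc : 0 < c) (H t : ℝ) :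
    invAbove H (t * c) = ENNReal.ofReal c⁻¹ * invAbove (H / c) t := by
  simp only [invAbove, div_lt_iff₀ hc]
  split_ifs
  · rw [mul_inv, ENNReal.ofReal_mul' (by positivity), mul_comm]
  · rw [mul_zero]

theorem tsum_invAbove_pow_le {k : ℕ} (hk : 2 ≤ k) {y : ℝ} (hy : 0 < y) :
    ∑' a : ℕ, invAbove y ((a : ℝ) ^ k) ≤ 2 * ENNReal.ofReal (y ^ ((1 : ℝ) / k - 1)) := by
  set x := y ^ ((k : ℝ)⁻¹)
  set N := ⌊x⌋₊
  have hx : 0 < x := by positivity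
  have hxk : x ^ k = y := Real.rpow_inv_natCast_pow hy.le (by omega)
  have hxN : x < N + 1 := Nat.lt_floor_add_one x
  have hterm (a : ℕ) : invAbove y ((a : ℝ) ^ k) ≤
      ENNReal.ofReal (((N + 1 : ℝ) ^ (k - 2))⁻¹) *
        ENNReal.ofReal (if N < a then ((a : ℝ) ^ 2)⁻¹ else 0) := by
    by_cases hya : y < (a : ℝ) ^ k
    · have hNa : N < a := by
        refine lt_of_not_ge fun haN => hya.not_ge ?_
        rw [← hxk]
        gcongr
        exact (Nat.cast_le.2 haN).trans (Nat.floor_le hx.le)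
      rw [invAbove, if_pos hya, if_pos hNa, ← ENNReal.ofReal_mul (by positivity)]
      refine ENNReal.ofReal_le_ofReal ?_
      have hNa' : (N + 1 : ℝ) ≤ a := by exact_mod_cast hNa
      calc ((a : ℝ) ^ k)⁻¹ = ((a : ℝ) ^ (k - 2))⁻¹ * ((a : ℝ) ^ 2)⁻¹ := by
            rw [← mul_inv, ← pow_add, Nat.sub_add_cancel hk]
        _ ≤ ((N + 1 : ℝ) ^ (k - 2))⁻¹ * ((a : ℝ) ^ 2)⁻¹ := by gcongr
    · simp [invAbove, hya]
  have hpow : ((N + 1 : ℝ) ^ (k - 1))⁻¹ ≤ y ^ ((1 : ℝ) / k - 1) := by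
    calc ((N + 1 : ℝ) ^ (k - 1))⁻¹ ≤ (x ^ (k - 1))⁻¹ := by gcongr
      _ = y ^ ((1 : ℝ) / k - 1) := by
        rw [← Real.rpow_natCast, ← Real.rpow_mul hy.le, ← Real.rpow_neg hy.le,
          Nat.cast_sub (by omega)]
        congr 1
        field_simp
        ring
  calc _ ≤ ∑' a : ℕ, ENNReal.ofReal (((N + 1 : ℝ) ^ (k - 2))⁻¹) *
        ENNReal.ofReal (if N < a then ((a : ℝ) ^ 2)⁻¹ else 0) := ENNReal.tsum_le_tsum hterm
    _ ≤ ENNReal.ofReal (((N + 1 : ℝ) ^ (k - 2))⁻¹) * ENNReal.ofReal (2 / (N + 1)) := by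
      rw [ENNReal.tsum_mul_left]
      gcongr
      exact tsum_ofReal_inv_sq_tail_le N
    _ = ENNReal.ofReal (2 * ((N + 1 : ℝ) ^ (k - 1))⁻¹) := by
      rw [← ENNReal.ofReal_mul (by positivity)]
      congr 1
      rw [show k - 1 = k - 2 + 1 by omega, pow_succ]
      field_simp
    _ ≤ 2 * ENNReal.ofReal (y ^ ((1 : ℝ) / k - 1)) := by
      rw [ENNReal.ofReal_mul zero_le_two, ENNReal.ofReal_ofNat]
      gcongr

theorem tsum_invAbove_pow_mul_prod_pow_le {k n : ℕ} (hk : 2 ≤ k) (e : Fin n → ℕ) {H : ℝ}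
    (hH : 0 < H) :
    ∑' x : ℕ × (Fin n → ℕ), invAbove H ((x.1 : ℝ) ^ k * ∏ i, (x.2 i : ℝ) ^ e i) ≤
      2 * (∑' b : Fin n → ℕ, ENNReal.ofReal ((∏ i, (b i : ℝ) ^ e i) ^ (-(1 / k : ℝ)))) *
        ENNReal.ofReal (H ^ ((1 : ℝ) / k - 1)) := by
  rw [ENNReal.tsum_prod', ENNReal.tsum_comm, ← ENNReal.tsum_mul_left, ← ENNReal.tsum_mul_right]
  refine ENNReal.tsum_le_tsum fun b => ?_
  dsimp only
  set W := ∏ i, (b i : ℝ) ^ e i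
  rcases (show 0 ≤ W by positivity).eq_or_lt with hW | hW
  · simp [← hW, invAbove_of_le hH.le]
  have hW' : W ^ ((1 : ℝ) / k) = W * W ^ ((1 : ℝ) / k - 1) := by
    conv_lhs => rw [show (1 : ℝ) / k = 1 + (1 / k - 1) by ring, Real.rpow_add hW, Real.rpow_one]
  calc ∑' a : ℕ, invAbove H ((a : ℝ) ^ k * W)
      = ENNReal.ofReal W⁻¹ * ∑' a : ℕ, invAbove (H / W) ((a : ℝ) ^ k) := by
        simp only [invAbove_mul hW, ENNReal.tsum_mul_left]
    _ ≤ ENNReal.ofReal W⁻¹ * (2 * ENNReal.ofReal ((H / W) ^ ((1 : ℝ) / k - 1))) := by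
        gcongr
        exact tsum_invAbove_pow_le hk (div_pos hH hW)
    _ = 2 * ENNReal.ofReal (W ^ (-(1 / k : ℝ))) * ENNReal.ofReal (H ^ ((1 : ℝ) / k - 1)) := by
        rw [mul_left_comm, ← ENNReal.ofReal_mul (by positivity), mul_assoc,
          ← ENNReal.ofReal_mul (by positivity)]
        congr 2
        rw [Real.div_rpow hH.le hW.le, Real.rpow_neg hW.le, hW']
        field_simp

theorem tsum_ofReal_prod_pow_rpow_neg_ne_top {k n : ℕ} (hk : 0 < k) (e : Fin n → ℕ)
    (he : ∀ i, k < e i) :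
    ∑' b : Fin n → ℕ, ENNReal.ofReal ((∏ i, (b i : ℝ) ^ e i) ^ (-(1 / k : ℝ))) ≠ ∞ := by
  have hsplit (b : Fin n → ℕ) : ENNReal.ofReal ((∏ i, (b i : ℝ) ^ e i) ^ (-(1 / k : ℝ))) =
      ∏ i, ENNReal.ofReal ((b i : ℝ) ^ (-(e i / k : ℝ))) := by
    rw [← Real.finsetProd_rpow _ _ fun i _ => by positivity,
      ENNReal.ofReal_prod_of_nonneg fun i _ => by positivity]
    refine prod_congr rfl fun i _ => ?_
    rw [← Real.rpow_natCast_mul (by positivity)]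
    ring_nf
  rw [tsum_congr hsplit,
    ← ENNReal.prod_tsum_eq_tsum_pi fun i (c : ℕ) => ENNReal.ofReal ((c : ℝ) ^ (-(e i / k : ℝ)))]
  refine ENNReal.prod_ne_top fun i _ => tsum_ofReal_rpow_neg_ne_top ?_
  rw [one_lt_div (by exact_mod_cast hk)]
  exact_mod_cast he i

theorem tsum_kFull_le_tsum_invAbove {k : ℕ} (hk : 1 ≤ k) {H : ℝ} (hH : 0 ≤ H) :
    ∑' m : {m : ℕ // IsKFull k m ∧ H < m}, ENNReal.ofReal (1 / (m : ℝ)) ≤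
      ∑' x : ℕ × (Fin (k - 1) → ℕ),
        invAbove H ((x.1 : ℝ) ^ k * ∏ i : Fin (k - 1), (x.2 i : ℝ) ^ (k + 1 + (i : ℕ))) := by
  have hrep (m : {m : ℕ // IsKFull k m ∧ H < m}) : ∃ x : ℕ × (Fin (k - 1) → ℕ),
      x.1 ^ k * ∏ i : Fin (k - 1), x.2 i ^ (k + 1 + (i : ℕ)) = m := by
    obtain ⟨a, b, h⟩ :=
      m.2.1.exists_pow_mul_prod_pow_eq hk (Nat.cast_ne_zero.1 (hH.trans_lt m.2.2).ne')
    exact ⟨(a, b), h⟩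
  choose φ hφ using hrep
  have hφ_inj : Function.Injective φ := fun m m' h =>
    Subtype.ext ((hφ m).symm.trans (h ▸ hφ m'))
  refine le_of_eq_of_le (tsum_congr fun m => ?_)
    (ENNReal.tsum_comp_le_tsum_of_injective hφ_inj _)
  have hcast := congrArg (Nat.cast : ℕ → ℝ) (hφ m)
  push_cast at hcast
  simp only [invAbove, hcast, if_pos m.2.2, one_div]

/-- For a fixed integer `k ≥ 2` there is a constant `C = C(k)`
such that for all real `H ≥ 1`, `Σ_{m k-full, m > H} 1/m ≤ C · H^{1/k - 1}`. -/
theorem kfull_tail_sum_bound (k : ℕ) (hk : 2 ≤ k) :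
    ∃ C : ℝ, ∀ H : ℝ, 1 ≤ H →
      (∑' m : {m : ℕ // IsKFull k m ∧ H < (m : ℝ)}, (1 : ℝ) / ((m : ℕ) : ℝ))
        ≤ C * H ^ ((1 : ℝ) / (k : ℝ) - 1) := by
  set D := ∑' b : Fin (k - 1) → ℕ,
    ENNReal.ofReal ((∏ i, (b i : ℝ) ^ (k + 1 + (i : ℕ))) ^ (-(1 / k : ℝ)))
  have hD : D ≠ ∞ := tsum_ofReal_prod_pow_rpow_neg_ne_top (by omega) _ fun _ => by omega
  refine ⟨2 * D.toReal, fun H hH => ?_⟩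
  have hH0 : 0 < H := by linarith
  refine tsum_le_of_tsum_ofReal_le (fun m => by positivity) (by positivity) ?_
  calc _ ≤ _ := tsum_kFull_le_tsum_invAbove (by omega) hH0.le
    _ ≤ 2 * D * ENNReal.ofReal (H ^ ((1 : ℝ) / k - 1)) :=
      tsum_invAbove_pow_mul_prod_pow_le hk _ hH0
    _ = ENNReal.ofReal (2 * D.toReal * H ^ ((1 : ℝ) / k - 1)) := by
      rw [ENNReal.ofReal_mul (by positivity), ENNReal.ofReal_mul zero_le_two,
        ENNReal.ofReal_toReal hD, ENNReal.ofReal_ofNat]
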